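/- arXiv:2105.14814 — 5 statements merged into one kernel-verified Lean document; each statement's English description precedes it below -/
import Mathlib

section
/- Let x, y, z ∈ ℤ with z > 0, gcd(x, y) = 1 and y even, and let m be a positive integer such that x² + y² = z^m. Then there exist natural numbers u, v with z = u² + v², gcd(u, v) = 1 and v even, and signs λ₁, λ₂ ∈ {−1, 1}, such that in the Gaussian integers ℤ[i] one has x + yi = λ₁(u + λ₂ v i)^m. -/
/-!
Put `w = x + yi`. As `gcd(x, y) = 1` and `x² + y²` is odd, `w` and its conjugate are coprime in
the principal ideal domain `ℤ[i]`; their product is `z^m`, so `w` is associated to some `d^m`.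
Multiplying `d` by `i` if necessary gives `d ≡ 1 (mod 2)`, hence `d^m ≡ 1 ≡ w (mod 2)`, which
rules out the units `±i`: `w = ±d^m`. Writing `d = ±(u ± vi)` with `u, v ≥ 0` and comparing
norms gives the representation.
-/

open Zsqrtd

local notation "ℤ[i]" => GaussianInt

namespace GaussianInt

lemma norm_eq_sq_add_sq (w : ℤ[i]) : w.norm = w.re ^ 2 + w.im ^ 2 := by
  rw [Zsqrtd.norm_def]; ring

lemma norm_pow (w : ℤ[i]) (n : ℕ) : (w ^ n).norm = w.norm ^ n :=
  map_pow normMonoidHom w n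

lemma odd_norm_iff {w : ℤ[i]} : Odd w.norm ↔ (Odd w.re ↔ Even w.im) := by
  rw [norm_eq_sq_add_sq, Int.odd_add, Int.odd_pow' two_ne_zero, Int.even_pow' two_ne_zero]

lemma isUnit_sqrtd : IsUnit (sqrtd : ℤ[i]) :=
  IsUnit.of_mul_eq_one (-sqrtd) (by ext <;> simp)

lemma two_dvd_sub_one_iff {w : ℤ[i]} : (2 : ℤ[i]) ∣ w - 1 ↔ Odd w.re ∧ Even w.im := by
  rw [← Int.cast_two, intCast_dvd, Int.odd_iff, Int.even_iff]
  simp only [re_sub, re_one, im_sub, im_one, sub_zero]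
  omega

lemma two_dvd_pow_sub_one {w : ℤ[i]} (h : (2 : ℤ[i]) ∣ w - 1) (n : ℕ) :
    (2 : ℤ[i]) ∣ w ^ n - 1 :=
  h.trans (sub_one_dvd_pow_sub_one w n)

lemma isCoprime_self_star {w : ℤ[i]} (hw : IsCoprime w.re w.im) (hodd : Odd w.norm) :
    IsCoprime w (star w) := by
  have hre : IsCoprime w.re w.norm := by
    simpa [norm_eq_sq_add_sq, sq, add_comm] using (hw.pow_right (n := 2)).add_mul_left_right w.re
  have hsum : w + star w = ((2 * w.re : ℤ) : ℤ[i]) := by ext <;> simp [two_mul]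
  have hprod : w * star w = (w.norm : ℤ[i]) := (norm_eq_mul_conj w).symm
  have h := ((Int.isCoprime_two_left.mpr hodd).mul_left hre).map (Int.castRingHom ℤ[i])
  rw [eq_intCast, eq_intCast, ← hsum, ← hprod] at h
  simpa using h.of_mul_right_left.symm.add_mul_left_right (-1)

lemma isCoprime_re_im_of_dvd {e w : ℤ[i]} (h : e ∣ w) (hw : IsCoprime w.re w.im) :
    IsCoprime e.re e.im := by
  rw [← isRelPrime_iff_isCoprime] at hw ⊢
  intro d hre him
  obtain ⟨hdre, hdim⟩ := (intCast_dvd d w).mp (((intCast_dvd d e).mpr ⟨hre, him⟩).trans h)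
  exact hw hdre hdim

lemma exists_associated_odd_re {d : ℤ[i]} (h : Odd d.norm) :
    ∃ e, Associated d e ∧ Odd e.re := by
  by_cases hre : Odd d.re
  · exact ⟨d, Associated.refl d, hre⟩
  · have him : Odd d.im := Int.not_even_iff_odd.mp fun him ↦ hre (odd_norm_iff.mp h |>.mpr him)
    exact ⟨d * sqrtd, associated_mul_unit_right d _ isUnit_sqrtd, by simpa using him.neg⟩

lemma exists_intCast_eq_of_isUnit {ε : ℤ[i]} (hε : IsUnit ε) (h : (2 : ℤ[i]) ∣ ε - 1) :
    ∃ s : ℤ, IsUnit s ∧ ε = s := by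
  have hnorm := (norm_eq_one_iff' (by norm_num) ε).mpr hε
  rw [norm_eq_sq_add_sq] at hnorm
  obtain ⟨⟨k, hk⟩, -⟩ := two_dvd_sub_one_iff.mp h
  have hre : ε.re ≠ 0 := by omega
  have him : ε.im = 0 := by
    nlinarith [pow_pos (abs_pos.mpr hre) 2, sq_abs ε.re, sq_nonneg ε.im]
  refine ⟨ε.re, IsUnit.of_mul_eq_one ε.re (by nlinarith), ?_⟩
  ext <;> simp [him]

-- The units `±i` are `≡ i (mod 2)`, so associates that are both `≡ 1 (mod 2)` differ by `±1`.
lemma exists_eq_intCast_mul_of_associated {a w : ℤ[i]} (h : Associated a w)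
    (ha : (2 : ℤ[i]) ∣ a - 1) (hw : (2 : ℤ[i]) ∣ w - 1) : ∃ s : ℤ, IsUnit s ∧ w = s * a := by
  obtain ⟨ε, rfl⟩ := h
  have hε : (2 : ℤ[i]) ∣ ε - 1 := by
    have := dvd_sub hw (ha.mul_right ε)
    rwa [show a * ε - 1 - (a - 1) * ε = (ε : ℤ[i]) - 1 by ring] at this
  obtain ⟨s, hs, hεs⟩ := exists_intCast_eq_of_isUnit ε.isUnit hε
  exact ⟨s, hs, by rw [← hεs, mul_comm]⟩

lemma exists_associated_pow_two_dvd_sub_one {w : ℤ[i]} {z : ℤ} {m : ℕ} (hm : m ≠ 0)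
    (hw : IsCoprime w.re w.im) (hw₁ : (2 : ℤ[i]) ∣ w - 1) (hnorm : w.norm = z ^ m) :
    ∃ e : ℤ[i], Associated (e ^ m) w ∧ (2 : ℤ[i]) ∣ e - 1 := by
  obtain ⟨hwre, hwim⟩ := two_dvd_sub_one_iff.mp hw₁
  have hodd : Odd w.norm := odd_norm_iff.mpr (iff_of_true hwre hwim)
  obtain ⟨d, hd⟩ := exists_associated_pow_of_mul_eq_pow' (isCoprime_self_star hw hodd)
    (show w * star w = (z : ℤ[i]) ^ m by rw [← norm_eq_mul_conj, hnorm]; push_cast; rfl)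
  have hdodd : Odd d.norm := by
    rwa [← norm_eq_of_associated (by norm_num) hd, norm_pow, Int.odd_pow' hm] at hodd
  obtain ⟨e, hde, hre⟩ := exists_associated_odd_re hdodd
  have heodd : Odd e.norm := by rwa [← norm_eq_of_associated (by norm_num) hde]
  exact ⟨e, hde.pow_pow.symm.trans hd,
    two_dvd_sub_one_iff.mpr ⟨hre, odd_norm_iff.mp heodd |>.mp hre⟩⟩

lemma exists_eq_sign_mul_natAbs (e : ℤ[i]) : ∃ s₁ s₂ : ℤ, IsUnit s₁ ∧ IsUnit s₂ ∧
    e = (s₁ : ℤ[i]) *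
      (((e.re.natAbs : ℤ) : ℤ[i]) + (s₂ : ℤ[i]) * ((e.im.natAbs : ℤ) : ℤ[i]) * sqrtd) := by
  rcases abs_cases e.re with ⟨hre, -⟩ | ⟨hre, -⟩ <;>
    rcases abs_cases e.im with ⟨him, -⟩ | ⟨him, -⟩
  · exact ⟨1, 1, isUnit_one, isUnit_one, by ext <;> simp [hre, him]⟩
  · exact ⟨1, -1, isUnit_one, isUnit_one.neg, by ext <;> simp [hre, him]⟩
  · exact ⟨-1, -1, isUnit_one.neg, isUnit_one.neg, by ext <;> simp [hre, him]⟩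
  · exact ⟨-1, 1, isUnit_one.neg, isUnit_one, by ext <;> simp [hre, him]⟩

end GaussianInt

open GaussianInt

/-- Representation of solutions of `x² + y² = z^m` (with `gcd(x,y) = 1`, `y` even,
`z > 0`) in the Gaussian integers: `z = u² + v²` with `gcd(u,v) = 1`, `v` even, and
`x + yi = λ₁(u + λ₂vi)^m` with `λ₁, λ₂ ∈ {-1, 1}`. -/
theorem sq_add_sq_eq_pow_gaussian_repr
    (x y z : ℤ) (hz : 0 < z) (hgcd : Int.gcd x y = 1) (hyeven : Even y)
    (m : ℕ) (hm : 0 < m) (heq : x ^ 2 + y ^ 2 = z ^ m) :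
    ∃ (u v : ℕ) (l₁ l₂ : ℤ),
      z = u ^ 2 + v ^ 2 ∧ Nat.gcd u v = 1 ∧ Even v ∧
      (l₁ = 1 ∨ l₁ = -1) ∧ (l₂ = 1 ∨ l₂ = -1) ∧
      ((x : GaussianInt) + (y : GaussianInt) * Zsqrtd.sqrtd
        = (l₁ : GaussianInt) * (((u : ℤ) : GaussianInt)
            + (l₂ : GaussianInt) * ((v : ℤ) : GaussianInt) * Zsqrtd.sqrtd) ^ m) := by
  set w : ℤ[i] := ⟨x, y⟩
  have hw : IsCoprime w.re w.im := Int.isCoprime_iff_gcd_eq_one.mpr hgcd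
  have hw₁ : (2 : ℤ[i]) ∣ w - 1 := two_dvd_sub_one_iff.mpr
    ⟨Int.isCoprime_two_right.mp (hw.of_isCoprime_of_dvd_right hyeven.two_dvd), hyeven⟩
  obtain ⟨e, he, he₁⟩ :=
    exists_associated_pow_two_dvd_sub_one hm.ne' hw hw₁ ((norm_eq_sq_add_sq w).trans heq)
  obtain ⟨s, hs, hws⟩ :=
    exists_eq_intCast_mul_of_associated he (two_dvd_pow_sub_one he₁ m) hw₁
  have hez : e.norm = z := by
    rw [← pow_left_inj₀ (norm_nonneg e) hz.le hm.ne', ← norm_pow,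
      norm_eq_of_associated (by norm_num) he, norm_eq_sq_add_sq, heq]
  obtain ⟨s₁, s₂, hs₁, hs₂, hse⟩ := exists_eq_sign_mul_natAbs e
  refine ⟨e.re.natAbs, e.im.natAbs, s * s₁ ^ m, s₂, ?_, ?_, ?_,
    Int.isUnit_iff.mp (hs.mul (hs₁.pow m)), Int.isUnit_iff.mp hs₂, ?_⟩
  · rw [← hez, norm_eq_sq_add_sq]
    simp
  · exact Int.isCoprime_iff_gcd_eq_one.mp
      (isCoprime_re_im_of_dvd ((dvd_pow_self e hm.ne').trans he.dvd) hw)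
  · exact Int.natAbs_even.mpr (two_dvd_sub_one_iff.mp he₁).2
  · rw [show (x : ℤ[i]) + (y : ℤ[i]) * sqrtd = w by ext <;> simp [w], hws]
    nth_rw 1 [hse]
    rw [mul_pow]
    push_cast
    ring
end

section
/- Let m and n be positive integers with m > n, gcd(m,n) = 1, m ≢ n (mod 2) and m² + n² ≡ 5 (mod 8). If positive integers x, y, z satisfy x² + (m² − n²)^y = (m² + n²)^z, then both y and z are even. -/
/-!
Put `a = m² - n²` and `b = m² + n²`; they are coprime and odd, and `a ≡ -2n² (mod b)`, so
`(a / b) = (-2 / b) = -1` because `b ≡ 5 (mod 8)`. As `b ≡ 1 (mod 4)`, reciprocity gives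
`(b / a) = -1` too. Reducing `x² + a^y = b^z` modulo `b` and modulo `a`, with `x` prime to both,
gives `1 = (-1 / b) (a / b)^y = (-1)^y` and `1 = (b / a)^z = (-1)^z`.
-/

theorem isCoprime_sq_add_sq_of_isCoprime {m n : ℤ} (h : IsCoprime m n) :
    IsCoprime n (m ^ 2 + n ^ 2) := by
  simpa [sq, add_comm] using (h.symm.pow_right (n := 2)).mul_add_right_right n

theorem isCoprime_sub_two_mul_sq {n b : ℤ} (hn : IsCoprime n b) (hb : Odd b) :
    IsCoprime (b - 2 * n ^ 2) b := by
  have h : IsCoprime (-2 * n ^ 2) b :=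
    (Int.isCoprime_two_left.mpr hb).neg_left.mul_left (hn.pow_left (m := 2))
  simpa [sub_eq_add_neg, add_comm] using h.add_mul_right_left 1

theorem jacobiSym_sub_two_mul_sq {n : ℤ} {b : ℕ} (hb : b % 8 = 5) (hn : IsCoprime n b) :
    jacobiSym (b - 2 * n ^ 2) b = -1 := by
  have hmod : (b - 2 * n ^ 2 : ℤ) ≡ -2 * n ^ 2 [ZMOD b] :=
    Int.modEq_iff_dvd.mpr ⟨-1, by ring⟩
  have hodd : Odd b := Nat.odd_iff.mpr (by omega)
  rw [jacobiSym.mod_left' hmod, jacobiSym.mul_left, jacobiSym.at_neg_two hodd,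
    jacobiSym.sq_one' (Int.isCoprime_iff_gcd_eq_one.mp hn), ZMod.χ₈'_nat_eq_if_mod_eight, hb,
    Nat.odd_iff.mp hodd]
  norm_num

theorem Nat.coprime_of_sq_add_pow_eq_pow {x a b y z : ℕ} (h : x ^ 2 + a ^ y = b ^ z)
    (hab : a.Coprime b) (hy : 0 < y) (hz : 0 < z) : x.Coprime a ∧ x.Coprime b := by
  have hxa : (x ^ 2).Coprime (a ^ y) := by
    rw [← Nat.coprime_add_self_left, h]
    exact (hab.pow y z).symm
  have hxb : (x ^ 2).Coprime (b ^ z) := by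
    rwa [← h, Nat.coprime_self_add_right]
  exact ⟨(Nat.coprime_pow_left_iff two_pos _ _).mp ((Nat.coprime_pow_right_iff hy _ _).mp hxa),
    (Nat.coprime_pow_left_iff two_pos _ _).mp ((Nat.coprime_pow_right_iff hz _ _).mp hxb)⟩

theorem even_of_sq_modEq_mul_pow {x a c : ℤ} {b k : ℕ} (hx : IsCoprime x b)
    (hc : jacobiSym c b = 1) (ha : jacobiSym a b = -1) (h : x ^ 2 ≡ c * a ^ k [ZMOD b]) :
    Even k := by
  have hk : (-1 : ℤ) ^ k = 1 := by
    calc (-1 : ℤ) ^ k = jacobiSym (c * a ^ k) b := by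
          rw [jacobiSym.mul_left, jacobiSym.pow_left, hc, ha, one_mul]
      _ = jacobiSym (x ^ 2) b := (jacobiSym.mod_left' h).symm
      _ = 1 := jacobiSym.sq_one' (Int.isCoprime_iff_gcd_eq_one.mp hx)
  exact (neg_one_pow_eq_one_iff_even (by norm_num)).mp hk

theorem exponents_even_of_solution_general
    (m n : ℕ) (hmn : n < m)
    (hgcd : Nat.gcd m n = 1)
    (hmod : (m ^ 2 + n ^ 2) % 8 = 5)
    (x y z : ℕ) (hy : 0 < y) (hz : 0 < z)
    (heq : x ^ 2 + (m ^ 2 - n ^ 2) ^ y = (m ^ 2 + n ^ 2) ^ z) :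
    Even y ∧ Even z := by
  set A := m ^ 2 - n ^ 2
  set B := m ^ 2 + n ^ 2
  have hAB : (A : ℤ) = B - 2 * (n : ℤ) ^ 2 := by
    push_cast [A, B, Nat.cast_sub (Nat.pow_le_pow_left hmn.le 2)]
    ring
  have hnB : IsCoprime (n : ℤ) B := by
    simpa [B] using isCoprime_sq_add_sq_of_isCoprime (Nat.isCoprime_iff_coprime.mpr hgcd)
  have hBodd : Odd B := Nat.odd_iff.mpr (by omega)
  have hAodd : Odd A := by
    rw [← Int.odd_coe_nat, hAB]
    exact hBodd.natCast.sub_even (even_two_mul _)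
  have hcop : A.Coprime B :=
    Nat.isCoprime_iff_coprime.mp (hAB ▸ isCoprime_sub_two_mul_sq hnB hBodd.natCast)
  have hJ : jacobiSym A B = -1 := hAB ▸ jacobiSym_sub_two_mul_sq hmod hnB
  obtain ⟨hxA, hxB⟩ := Nat.coprime_of_sq_add_pow_eq_pow heq hcop hy hz
  have heqZ : (x : ℤ) ^ 2 = (B : ℤ) ^ z - (A : ℤ) ^ y := by
    rw [eq_sub_iff_add_eq]
    exact_mod_cast heq
  constructor
  · refine even_of_sq_modEq_mul_pow (c := -1) (Nat.isCoprime_iff_coprime.mpr hxB) ?_ hJ ?_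
    · rw [jacobiSym.at_neg_one hBodd, ZMod.χ₄_nat_one_mod_four (by omega)]
    · rw [heqZ, neg_one_mul, ← zero_sub]
      exact (Int.modEq_zero_iff_dvd.mpr (dvd_pow_self _ hz.ne')).sub_right _
  · refine even_of_sq_modEq_mul_pow (c := 1) (a := B) (Nat.isCoprime_iff_coprime.mpr hxA)
      (jacobiSym.one_left _) ?_ ?_
    · rwa [jacobiSym.quadratic_reciprocity_one_mod_four (by omega) hAodd]
    · rw [heqZ, one_mul, Int.modEq_iff_dvd, sub_sub_cancel]
      exact dvd_pow_self _ hy.ne'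

/-- If `m² + n² ≡ 5 (mod 8)` (with `m > n`, `gcd(m,n) = 1`, `m ≢ n (mod 2)`) and
positive integers `x, y, z` satisfy `x² + (m²-n²)^y = (m²+n²)^z`, then `y` and `z`
are even. -/
theorem exponents_even_of_solution
    (m n : ℕ) (hm : 0 < m) (hn : 0 < n) (hmn : n < m)
    (hgcd : Nat.gcd m n = 1) (hpar : m % 2 ≠ n % 2)
    (hmod : (m ^ 2 + n ^ 2) % 8 = 5)
    (x y z : ℕ) (hx : 0 < x) (hy : 0 < y) (hz : 0 < z)
    (heq : x ^ 2 + (m ^ 2 - n ^ 2) ^ y = (m ^ 2 + n ^ 2) ^ z) :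
    Even y ∧ Even z :=
  exponents_even_of_solution_general m n hmn hgcd hmod x y z hy hz heq
end

section
/- Let m and n be positive integers with m > n, gcd(m,n) = 1, m ≢ n (mod 2) and m² + n² ≡ 5 (mod 8). Suppose u and v are positive integers with u > v, gcd(u,v) = 1 and u ≢ v (mod 2), and r, k are positive integers such that u² − v² = (m² − n²)^r and u² + v² = (m² + n²)^k. Then both r and k are odd. -/
/-!
Work modulo 8, where the squares are 0, 1, 4. A sum `a² + b²` is `≡ ±3` exactly when
`{a², b²} ≡ {1, 4}`, and so is a difference `a² - b²`. As `(m² + n²)ᵏ` and `(m² - n²)ʳ` are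
`≡ ±3` for odd exponents and `≡ 1` for even ones, the two equations force `r` and `k` to have the
same parity. If both were even, `u² - v²` and `u² + v²` would be squares, and `u⁴ - v⁴` would be a
nonzero square. Fermat's descent excludes this: for coprime `x, y` with `x⁴ - y⁴ = z²`, the
primitive Pythagorean triple `(y², z, x²)` (`y` odd) or `(z, y², x²)` (`y` even, after a second
triple) yields a solution with smaller `|x|`.
-/

theorem Int.exists_sq_of_isCoprime_of_mul_eq_sq {a b c : ℤ} (hab : IsCoprime a b) (ha : 0 ≤ a)
    (h : a * b = c ^ 2) : ∃ d, a = d ^ 2 := by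
  obtain ⟨d, hd | hd⟩ := Int.sq_of_isCoprime hab h
  · exact ⟨d, hd⟩
  · exact ⟨0, by nlinarith [sq_nonneg d]⟩

def Fermat42Sub (x y z : ℤ) : Prop := y ≠ 0 ∧ z ≠ 0 ∧ x ^ 4 - y ^ 4 = z ^ 2

namespace Fermat42Sub

theorem ne_zero {x y z : ℤ} (h : Fermat42Sub x y z) : x ≠ 0 := by
  obtain ⟨hy, -, h⟩ := h
  rintro rfl
  nlinarith [pow_pos (sq_pos_of_ne_zero hy) 2, sq_nonneg z]

theorem exists_coprime {x y z : ℤ} (h : Fermat42Sub x y z) :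
    ∃ x' y' z', Fermat42Sub x' y' z' ∧ IsCoprime x' y' ∧ x'.natAbs ≤ x.natAbs := by
  obtain ⟨hy, hz, h⟩ := h
  obtain ⟨g, x', y', hg, hcop, rfl, rfl⟩ :=
    Int.exists_gcd_one' (Int.gcd_pos_of_ne_zero_right x hy)
  have hg4 : (g : ℤ) ^ 4 ≠ 0 := by positivity
  obtain ⟨z', rfl⟩ : (g : ℤ) ^ 2 ∣ z :=
    (Int.pow_dvd_pow_iff two_ne_zero).mp ⟨x' ^ 4 - y' ^ 4, by linear_combination -h⟩
  refine ⟨x', y', z', ⟨left_ne_zero_of_mul hy, right_ne_zero_of_mul hz, ?_⟩,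
    Int.isCoprime_iff_gcd_eq_one.mpr hcop, ?_⟩
  · exact mul_left_cancel₀ hg4 (by linear_combination h)
  · rw [Int.natAbs_mul, Int.natAbs_natCast]
    exact Nat.le_mul_of_pos_right _ hg

theorem isCoprime_right_of_isCoprime {x y z : ℤ} (h : Fermat42Sub x y z) (hxy : IsCoprime x y) :
    IsCoprime y z := by
  have : IsCoprime (x ^ 4 + y ^ 4 * (-1)) (y ^ 4) := hxy.pow.add_mul_left_left (-1)
  rw [show x ^ 4 + y ^ 4 * (-1) = z ^ 2 by linear_combination h.2.2] at this
  exact (IsCoprime.pow_iff (by norm_num) (by norm_num)).mp this.symm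

theorem exists_natAbs_lt_of_odd {x y z : ℤ} (h : Fermat42Sub x y z) (hxy : IsCoprime x y)
    (hy : Odd y) : ∃ x' y' z', Fermat42Sub x' y' z' ∧ x'.natAbs < x.natAbs := by
  have hx := h.ne_zero
  have hyz := h.isCoprime_right_of_isCoprime hxy
  obtain ⟨hy0, hz0, h⟩ := h
  have ht : PythagoreanTriple (y ^ 2) z (x ^ 2) := by
    unfold PythagoreanTriple; linear_combination -h
  obtain ⟨p, q, hyp, hzp, hxp, -, -, -⟩ := ht.coprime_classification'
    (Int.isCoprime_iff_gcd_eq_one.mp hyz.pow_left) (Int.odd_iff.mp hy.pow) (by positivity)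
  have hq : q ≠ 0 := by rintro rfl; exact hz0 (by simp [hzp])
  refine ⟨p, q, x * y, ⟨hq, mul_ne_zero hx hy0, ?_⟩, ?_⟩
  · linear_combination -x ^ 2 * hyp - (p ^ 2 - q ^ 2) * hxp
  · rw [Int.natAbs_lt_iff_sq_lt, hxp]
    have : 0 < q ^ 2 := by positivity
    linarith

theorem exists_natAbs_lt_of_sq_eq_pow_four_add {x c d : ℤ} (hc : c ≠ 0) (hd : Odd d)
    (hcd : IsCoprime c d) (h : x ^ 2 = d ^ 4 + 4 * c ^ 4) :
    ∃ x' y' z', Fermat42Sub x' y' z' ∧ x'.natAbs < x.natAbs := by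
  have ht : PythagoreanTriple (d ^ 2) (2 * c ^ 2) |x| := by
    rw [PythagoreanTriple, abs_mul_abs_self]; linear_combination -h
  have hcop : IsCoprime (d ^ 2) (2 * c ^ 2) :=
    ((Int.isCoprime_two_right.mpr hd).mul_right hcd.symm.pow_right).pow_left
  have hx : 0 < |x| := by
    rw [abs_pos]; rintro rfl; nlinarith [pow_pos (sq_pos_of_ne_zero hc) 2, sq_nonneg (d ^ 2)]
  obtain ⟨e, f, hde, hcf, hxe, hef, -, he⟩ := ht.coprime_classification'
    (Int.isCoprime_iff_gcd_eq_one.mp hcop) (Int.odd_iff.mp hd.pow) hx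
  have hef : IsCoprime e f := Int.isCoprime_iff_gcd_eq_one.mpr hef
  have hc2 : e * f = c ^ 2 := by linarith
  have hpos : 0 < e * f := by rw [hc2]; positivity
  have hf : 0 < f := pos_of_mul_pos_right hpos he
  obtain ⟨g, rfl⟩ := Int.exists_sq_of_isCoprime_of_mul_eq_sq hef he hc2
  obtain ⟨h, rfl⟩ := Int.exists_sq_of_isCoprime_of_mul_eq_sq hef.symm hf.le
    (by rw [mul_comm]; exact hc2)
  refine ⟨g, h, d, ⟨?_, fun hd0 => by simp [hd0] at hd, ?_⟩, ?_⟩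
  · rintro rfl; simp at hf
  · linear_combination -hde
  · rw [Int.natAbs_lt_iff_sq_lt, ← sq_abs x, hxe]
    have : 0 < g ^ 2 := pos_of_mul_pos_left hpos hf.le
    nlinarith

theorem exists_natAbs_lt_of_mul_eq_two_mul_sq {x w p q : ℤ} (hp : 0 < p) (hq : 0 < q)
    (hpq : IsCoprime p q) (hpe : Even p) (hw : p * q = 2 * w ^ 2) (hx : x ^ 2 = p ^ 2 + q ^ 2) :
    ∃ x' y' z', Fermat42Sub x' y' z' ∧ x'.natAbs < x.natAbs := by
  obtain ⟨a, rfl⟩ := hpe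
  rw [← two_mul] at hpq
  have haq : a * q = w ^ 2 := by linarith
  have hcop : IsCoprime a q := hpq.of_mul_left_right
  have hqodd : Odd q := Int.isCoprime_two_left.mp hpq.of_mul_left_left
  obtain ⟨c, rfl⟩ := Int.exists_sq_of_isCoprime_of_mul_eq_sq hcop (by linarith) haq
  obtain ⟨d, rfl⟩ := Int.exists_sq_of_isCoprime_of_mul_eq_sq hcop.symm hq.le
    (by rw [mul_comm]; exact haq)
  refine exists_natAbs_lt_of_sq_eq_pow_four_add (c := c) (d := d) ?_ ?_ ?_ ?_
  · rintro rfl; simp at hp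
  · exact (Int.odd_pow' two_ne_zero).mp hqodd
  · exact (IsCoprime.pow_iff two_pos two_pos).mp hcop
  · linear_combination hx

theorem exists_natAbs_lt_of_even {x y z : ℤ} (h : Fermat42Sub x y z) (hxy : IsCoprime x y)
    (hy : Even y) : ∃ x' y' z', Fermat42Sub x' y' z' ∧ x'.natAbs < x.natAbs := by
  have hx := h.ne_zero
  have hyz := h.isCoprime_right_of_isCoprime hxy
  obtain ⟨hy0, hz0, h⟩ := h
  obtain ⟨w, rfl⟩ := hy
  rw [← two_mul] at *
  have hxodd : Odd x := Int.isCoprime_two_right.mp hxy.of_mul_right_left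
  have hzodd : Odd z := by
    have : Odd (z ^ 2) := by
      rw [← h]; exact hxodd.pow.sub_even ((even_two_mul w).pow_of_ne_zero four_ne_zero)
    exact (Int.odd_pow' two_ne_zero).mp this
  have ht : PythagoreanTriple z ((2 * w) ^ 2) (x ^ 2) := by
    unfold PythagoreanTriple; linear_combination -h
  obtain ⟨p, q, -, hyp, hxp, hpq, hpar, hp⟩ := ht.coprime_classification'
    (Int.isCoprime_iff_gcd_eq_one.mp hyz.symm.pow_right) (Int.odd_iff.mp hzodd) (by positivity)
  have hpq' : p * q = 2 * w ^ 2 := by linarith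
  have hw : w ≠ 0 := right_ne_zero_of_mul hy0
  have hpos : 0 < p * q := by rw [hpq']; positivity
  have hq : 0 < q := pos_of_mul_pos_right hpos hp
  have hp : 0 < p := pos_of_mul_pos_left hpos hq.le
  have hpq := Int.isCoprime_iff_gcd_eq_one.mpr hpq
  rcases hpar with ⟨hpe, -⟩ | ⟨-, hqe⟩
  · exact exists_natAbs_lt_of_mul_eq_two_mul_sq hp hq hpq (Int.even_iff.mpr hpe) hpq' hxp
  · exact exists_natAbs_lt_of_mul_eq_two_mul_sq hq hp hpq.symm (Int.even_iff.mpr hqe)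
      (by rw [mul_comm, hpq']) (by rw [hxp, add_comm])

theorem exists_natAbs_lt {x y z : ℤ} (h : Fermat42Sub x y z) :
    ∃ x' y' z', Fermat42Sub x' y' z' ∧ x'.natAbs < x.natAbs := by
  obtain ⟨x', y', z', h', hxy, hle⟩ := h.exists_coprime
  obtain ⟨x'', y'', z'', h'', hlt⟩ := (Int.even_or_odd y').elim
    (h'.exists_natAbs_lt_of_even hxy) (h'.exists_natAbs_lt_of_odd hxy)
  exact ⟨x'', y'', z'', h'', hlt.trans_le hle⟩

end Fermat42Sub

theorem not_fermat42Sub {x y z : ℤ} : ¬Fermat42Sub x y z := by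
  induction hn : x.natAbs using Nat.strong_induction_on generalizing x y z with
  | _ n ih =>
    intro h
    obtain ⟨x', y', z', h', hlt⟩ := h.exists_natAbs_lt
    exact ih _ (hn ▸ hlt) rfl h'

theorem sq_add_sq_ne_sq_of_sq_sub_sq_eq_sq {u v a b : ℤ} (hv : v ≠ 0) (ha : a ≠ 0)
    (h : u ^ 2 - v ^ 2 = a ^ 2) : u ^ 2 + v ^ 2 ≠ b ^ 2 := by
  intro h'
  have hb : b ≠ 0 := by rintro rfl; nlinarith [sq_pos_of_ne_zero hv, sq_nonneg u]
  exact not_fermat42Sub (x := u) ⟨hv, mul_ne_zero ha hb, by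
    linear_combination (u ^ 2 + v ^ 2) * h + a ^ 2 * h'⟩

def ZMod.IsPmThree (x : ZMod 8) : Prop := x = 3 ∨ x = -3

theorem ZMod.isPmThree_pow_iff {x : ZMod 8} (hx : x.IsPmThree) (j : ℕ) :
    (x ^ j).IsPmThree ↔ Odd j := by
  have hx2 : x ^ 2 = 1 := by rcases hx with rfl | rfl <;> decide
  obtain ⟨i, rfl | rfl⟩ := Nat.even_or_odd' j
  · rw [pow_mul, hx2, one_pow, iff_false_intro (Nat.not_odd_iff_even.mpr (even_two_mul i)),
      IsPmThree]
    decide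
  · simpa [pow_succ, pow_mul, hx2] using hx

theorem ZMod.isPmThree_sq_add_sq_iff (a b : ZMod 8) :
    (a ^ 2 + b ^ 2).IsPmThree ↔ (a ^ 2 - b ^ 2).IsPmThree := by
  unfold IsPmThree; revert a b; decide

theorem exponents_odd_of_pythagorean_decomposition_general
    (m n : ℕ) (hmn : n < m)
    (hmod : (m ^ 2 + n ^ 2) % 8 = 5)
    (u v : ℕ) (hv : 0 < v) (huv : v < u)
    (r k : ℕ)
    (h1 : u ^ 2 - v ^ 2 = (m ^ 2 - n ^ 2) ^ r)
    (h2 : u ^ 2 + v ^ 2 = (m ^ 2 + n ^ 2) ^ k) :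
    Odd r ∧ Odd k := by
  have hnm : n ^ 2 < m ^ 2 := Nat.pow_lt_pow_left hmn two_ne_zero
  have hvu : v ^ 2 ≤ u ^ 2 := Nat.pow_le_pow_left huv.le 2
  have hS : ((m : ZMod 8) ^ 2 + (n : ZMod 8) ^ 2).IsPmThree := by
    have := (ZMod.natCast_eq_natCast_iff' (m ^ 2 + n ^ 2) 5 8).mpr hmod
    push_cast at this
    exact Or.inr (by rw [this]; decide)
  have hD := (ZMod.isPmThree_sq_add_sq_iff _ _).mp hS
  have h1' := congrArg (Nat.cast : ℕ → ZMod 8) h1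
  have h2' := congrArg (Nat.cast : ℕ → ZMod 8) h2
  push_cast [hnm.le, hvu] at h1' h2'
  have hrk : Odd r ↔ Odd k := by
    rw [← ZMod.isPmThree_pow_iff hD, ← h1', ← ZMod.isPmThree_sq_add_sq_iff, h2',
      ZMod.isPmThree_pow_iff hS]
  by_contra hodd
  obtain ⟨r', rfl⟩ : Even r := Nat.not_odd_iff_even.mp (by tauto)
  obtain ⟨k', rfl⟩ : Even k := Nat.not_odd_iff_even.mp (by tauto)
  rw [← two_mul, pow_mul'] at h1 h2
  zify [hnm.le, hvu] at h1 h2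
  exact sq_add_sq_ne_sq_of_sq_sub_sq_eq_sq (by exact_mod_cast hv.ne')
    (pow_ne_zero _ (sub_ne_zero.mpr (by exact_mod_cast hnm.ne'))) h1 h2

/-- With `m² + n² ≡ 5 (mod 8)`: if `u² - v² = (m²-n²)^r` and `u² + v² = (m²+n²)^k`
for a primitive pair `(u, v)`, then `r` and `k` are odd. -/
theorem exponents_odd_of_pythagorean_decomposition
    (m n : ℕ) (hm : 0 < m) (hn : 0 < n) (hmn : n < m)
    (hgcd : Nat.gcd m n = 1) (hpar : m % 2 ≠ n % 2)
    (hmod : (m ^ 2 + n ^ 2) % 8 = 5)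
    (u v : ℕ) (hu : 0 < u) (hv : 0 < v) (huv : v < u)
    (hgcduv : Nat.gcd u v = 1) (hparuv : u % 2 ≠ v % 2)
    (r k : ℕ) (hr : 0 < r) (hk : 0 < k)
    (h1 : u ^ 2 - v ^ 2 = (m ^ 2 - n ^ 2) ^ r)
    (h2 : u ^ 2 + v ^ 2 = (m ^ 2 + n ^ 2) ^ k) :
    Odd r ∧ Odd k :=
  exponents_odd_of_pythagorean_decomposition_general m n hmn hmod u v hv huv r k h1 h2
end

section
/- Let c and d be integers and let k be a positive integer with k ≡ 1 (mod 4). Then in the ring of Gaussian integers ℤ[i], c + d divides (c + di)^k(1 − i) + (c − di)^k(1 + i), and c − d divides (c + di)^k(1 + i) + (c − di)^k(1 − i). -/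
/-!
Modulo `c + d` we have `c ≡ -d`, so `c + di ≡ -d(1 - i)` and `c - di ≡ -d(1 + i)`, and the
expression becomes `(-d)^k ((1 + i)^(k+1) + (1 - i)^(k+1))`. As `(1 ± i)^2 = ±2i` and
`(k + 1)/2` is odd, the two powers cancel. The second divisibility is the first one for `(c, -d)`.
-/

section ImaginaryUnit

variable {R : Type*} [CommRing R] {i : R}

theorem one_add_pow_add_one_sub_pow_eq_zero (hi : i ^ 2 = -1) {n : ℕ} (hn : n % 4 = 2) :
    (1 + i) ^ n + (1 - i) ^ n = 0 := by
  obtain ⟨m, hm, rfl⟩ : ∃ m, Odd m ∧ n = 2 * m := ⟨n / 2, Nat.odd_iff.2 (by omega), by omega⟩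
  have h_add : (1 + i) ^ 2 = 2 * i := by linear_combination hi
  have h_sub : (1 - i) ^ 2 = -(2 * i) := by linear_combination hi
  rw [pow_mul, pow_mul, h_add, h_sub, hm.neg_pow, add_neg_cancel]

theorem pow_mul_one_sub_add_pow_mul_one_add_eq_zero (hi : i ^ 2 = -1)
    {c d : R} (hcd : c + d = 0) {k : ℕ} (hk : k % 4 = 1) :
    (c + d * i) ^ k * (1 - i) + (c - d * i) ^ k * (1 + i) = 0 := by
  obtain rfl : c = -d := eq_neg_of_add_eq_zero_left hcd
  calc (-d + d * i) ^ k * (1 - i) + (-d - d * i) ^ k * (1 + i)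
      = (-d * (1 - i)) ^ k * (1 - i) + (-d * (1 + i)) ^ k * (1 + i) := by ring
    _ = (-d) ^ k * ((1 + i) ^ (k + 1) + (1 - i) ^ (k + 1)) := by rw [mul_pow, mul_pow]; ring
    _ = 0 := by rw [one_add_pow_add_one_sub_pow_eq_zero hi (by omega), mul_zero]

end ImaginaryUnit

theorem GaussianInt.sqrtd_sq : (Zsqrtd.sqrtd : GaussianInt) ^ 2 = -1 := by
  rw [sq, Zsqrtd.dmuld]; rfl

theorem GaussianInt.intCast_add_dvd_pow_mul_one_sub_add_pow_mul_one_add (c d : ℤ) {k : ℕ}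
    (hk : k % 4 = 1) :
    ((c + d : ℤ) : GaussianInt) ∣
      ((c : GaussianInt) + (d : GaussianInt) * Zsqrtd.sqrtd) ^ k * (1 - Zsqrtd.sqrtd)
        + ((c : GaussianInt) - (d : GaussianInt) * Zsqrtd.sqrtd) ^ k * (1 + Zsqrtd.sqrtd) := by
  let π := Ideal.Quotient.mk (Ideal.span {((c + d : ℤ) : GaussianInt)})
  have hi : π Zsqrtd.sqrtd ^ 2 = -1 := by rw [← map_pow, GaussianInt.sqrtd_sq, map_neg, map_one]
  have hcd : π c + π d = 0 := by
    rw [← map_add, Ideal.Quotient.eq_zero_iff_dvd]; push_cast; rfl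
  rw [← Ideal.Quotient.eq_zero_iff_dvd]
  simpa only [map_add, map_sub, map_mul, map_pow, map_one] using
    pow_mul_one_sub_add_pow_mul_one_add_eq_zero hi hcd hk

theorem gaussian_dvd_of_k_mod_four_eq_one_general
    (c d : ℤ) (k : ℕ) (hkmod : k % 4 = 1) :
    (((c + d : ℤ) : GaussianInt) ∣
      ((c : GaussianInt) + (d : GaussianInt) * Zsqrtd.sqrtd) ^ k * (1 - Zsqrtd.sqrtd)
        + ((c : GaussianInt) - (d : GaussianInt) * Zsqrtd.sqrtd) ^ k * (1 + Zsqrtd.sqrtd))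
    ∧ (((c - d : ℤ) : GaussianInt) ∣
      ((c : GaussianInt) + (d : GaussianInt) * Zsqrtd.sqrtd) ^ k * (1 + Zsqrtd.sqrtd)
        + ((c : GaussianInt) - (d : GaussianInt) * Zsqrtd.sqrtd) ^ k * (1 - Zsqrtd.sqrtd)) := by
  refine ⟨GaussianInt.intCast_add_dvd_pow_mul_one_sub_add_pow_mul_one_add c d hkmod, ?_⟩
  have h := GaussianInt.intCast_add_dvd_pow_mul_one_sub_add_pow_mul_one_add c (-d) hkmod
  push_cast at h ⊢
  convert h using 1 <;> ring

/-- For integers `c, d` and a positive integer `k ≡ 1 (mod 4)`, in the Gaussian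
integers `c + d` divides `(c+di)^k(1-i) + (c-di)^k(1+i)` and `c - d` divides
`(c+di)^k(1+i) + (c-di)^k(1-i)`. -/
theorem gaussian_dvd_of_k_mod_four_eq_one
    (c d : ℤ) (k : ℕ) (hk : 0 < k) (hkmod : k % 4 = 1) :
    (((c + d : ℤ) : GaussianInt) ∣
      ((c : GaussianInt) + (d : GaussianInt) * Zsqrtd.sqrtd) ^ k * (1 - Zsqrtd.sqrtd)
        + ((c : GaussianInt) - (d : GaussianInt) * Zsqrtd.sqrtd) ^ k * (1 + Zsqrtd.sqrtd))
    ∧ (((c - d : ℤ) : GaussianInt) ∣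
      ((c : GaussianInt) + (d : GaussianInt) * Zsqrtd.sqrtd) ^ k * (1 + Zsqrtd.sqrtd)
        + ((c : GaussianInt) - (d : GaussianInt) * Zsqrtd.sqrtd) ^ k * (1 - Zsqrtd.sqrtd)) :=
  gaussian_dvd_of_k_mod_four_eq_one_general c d k hkmod
end

section
/- Let m and n be positive integers with m > n, gcd(m,n) = 1 and m ≢ n (mod 2). Let c and d be integers with c² + d² = m² + n², c² − d² = ±(m² − n²) and cd = ±mn, and let k > 1 and r > 1 be integers with k odd. If in the Gaussian integers ℤ[i] one has (c + di)^{2k} + (c − di)^{2k} = 2(m² − n²)^r, then m² − n² divides k. -/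
/-!
Put `a = c² - d² = ±(m² - n²)` and `b = 2cd = ±2mn`, so that `(c ± di)² = a ± bi`.
For odd `k`, the binomial expansions of `(a + bi)^k` and `(a - bi)^k` agree modulo `a²` up to
the sign of `(bi)^k`, so their sum is `2ka(bi)^(k-1) = 2ka(-b²)^((k-1)/2)` modulo `a²`.
The sum is `2(m² - n²)^r` with `r ≥ 2`, hence divisible by `a²`, so `a` divides
`2k(-b²)^((k-1)/2)`; as `m, n` are coprime of opposite parity, `a` is coprime to `2b`.
-/

theorem Odd.sq_dvd_add_pow_add_sub_pow_sub {R : Type*} [CommRing R] {k : ℕ} (hk : Odd k)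
    (x y : R) : x ^ 2 ∣ (x + y) ^ k + (x - y) ^ k - 2 * k * x * (y ^ 2) ^ (k / 2) := by
  have hk' : k - 1 = 2 * (k / 2) := by obtain ⟨j, rfl⟩ := hk; omega
  have hplus := sq_dvd_add_pow_sub_sub x y k
  have hminus := sq_dvd_add_pow_sub_sub x (-y) k
  rw [hk.neg_pow, (Nat.Odd.sub_odd hk odd_one).neg_pow] at hminus
  convert dvd_add hplus hminus using 1
  rw [hk', pow_mul]
  ring

theorem GaussianInt.add_pow_two_mul_add_sub_pow_two_mul (c d : ℤ) (k : ℕ) :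
    ((c : GaussianInt) + (d : GaussianInt) * Zsqrtd.sqrtd) ^ (2 * k)
      + ((c : GaussianInt) - (d : GaussianInt) * Zsqrtd.sqrtd) ^ (2 * k)
    = (((c ^ 2 - d ^ 2 : ℤ) : GaussianInt) + ((2 * c * d : ℤ) : GaussianInt) * Zsqrtd.sqrtd) ^ k
      + (((c ^ 2 - d ^ 2 : ℤ) : GaussianInt) - ((2 * c * d : ℤ) : GaussianInt) * Zsqrtd.sqrtd)
        ^ k := by
  rw [pow_mul, pow_mul]
  congr 2 <;>
  · push_cast
    linear_combination (d : GaussianInt) ^ 2 * Zsqrtd.dmuld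

theorem GaussianInt.sq_dvd_sub_of_add_pow_add_sub_pow_eq {k : ℕ} (hk : Odd k) {a b N : ℤ}
    (h : ((a : GaussianInt) + (b : GaussianInt) * Zsqrtd.sqrtd) ^ k
      + ((a : GaussianInt) - (b : GaussianInt) * Zsqrtd.sqrtd) ^ k
      = (N : GaussianInt)) :
    a ^ 2 ∣ N - 2 * k * a * (-b ^ 2) ^ (k / 2) := by
  have hsq : ((b : GaussianInt) * Zsqrtd.sqrtd) ^ 2 = ((-b ^ 2 : ℤ) : GaussianInt) := by
    push_cast
    linear_combination (b : GaussianInt) ^ 2 * Zsqrtd.dmuld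
  have := hk.sq_dvd_add_pow_add_sub_pow_sub (a : GaussianInt) ((b : GaussianInt) * Zsqrtd.sqrtd)
  rw [h, hsq] at this
  exact_mod_cast this

theorem GaussianInt.dvd_of_add_pow_add_sub_pow_eq {k : ℕ} (hk : Odd k) {a b N : ℤ}
    (h : ((a : GaussianInt) + (b : GaussianInt) * Zsqrtd.sqrtd) ^ k
      + ((a : GaussianInt) - (b : GaussianInt) * Zsqrtd.sqrtd) ^ k
      = (N : GaussianInt))
    (hN : a ^ 2 ∣ N) (ha : IsCoprime a 2) (hab : IsCoprime a b) : a ∣ k := by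
  have ha0 : a ≠ 0 := fun h0 => by simp [h0] at ha
  have hdvd : a * a ∣ a * (k * (2 * (-b ^ 2) ^ (k / 2))) := by
    have := dvd_sub hN (sq_dvd_sub_of_add_pow_add_sub_pow_eq hk h)
    rw [sub_sub_cancel, sq] at this
    exact this.trans (dvd_of_eq (by ring))
  exact (ha.mul_right hab.pow_right.neg_right.pow_right).dvd_of_dvd_mul_right
    ((mul_dvd_mul_iff_left ha0).1 hdvd)

theorem Int.isCoprime_sq_sub_sq_two_mul_mul {m n : ℤ} (h : IsCoprime m n) (hodd : Odd (m - n)) :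
    IsCoprime (m ^ 2 - n ^ 2) (2 * m * n) := by
  have hm : IsCoprime (m ^ 2 - n ^ 2) m := by
    rw [show m ^ 2 - n ^ 2 = -n ^ 2 + m * m by ring]
    exact (h.symm.pow_left (m := 2)).neg_left.add_mul_left_left m
  have hn : IsCoprime (m ^ 2 - n ^ 2) n := by
    rw [show m ^ 2 - n ^ 2 = m ^ 2 + n * -n by ring]
    exact (h.pow_left (m := 2)).add_mul_left_left (-n)
  have hodd' : Odd (m ^ 2 - n ^ 2) := by
    rw [show m ^ 2 - n ^ 2 = (m - n) * (m - n + 2 * n) by ring]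
    exact hodd.mul (hodd.add_even (even_two_mul n))
  exact ((Int.isCoprime_two_right.2 hodd').mul_right hm).mul_right hn

theorem sq_sub_sq_dvd_k_general
    (m n : ℕ) (hmn : n < m)
    (hgcd : Nat.gcd m n = 1) (hpar : m % 2 ≠ n % 2)
    (c d : ℤ)
    (h2 : c ^ 2 - d ^ 2 = ((m : ℤ) ^ 2 - (n : ℤ) ^ 2)
          ∨ c ^ 2 - d ^ 2 = -((m : ℤ) ^ 2 - (n : ℤ) ^ 2))
    (h3 : c * d = (m : ℤ) * n ∨ c * d = -((m : ℤ) * n))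
    (k r : ℕ) (hr : 1 < r) (hkodd : Odd k)
    (heq : ((c : GaussianInt) + (d : GaussianInt) * Zsqrtd.sqrtd) ^ (2 * k)
        + ((c : GaussianInt) - (d : GaussianInt) * Zsqrtd.sqrtd) ^ (2 * k)
        = ((2 * ((m : ℤ) ^ 2 - (n : ℤ) ^ 2) ^ r : ℤ) : GaussianInt)) :
    (m ^ 2 - n ^ 2) ∣ k := by
  set D : ℤ := (m : ℤ) ^ 2 - (n : ℤ) ^ 2
  have hcop : IsCoprime (c ^ 2 - d ^ 2) (2 * c * d) := by
    have := Int.isCoprime_sq_sub_sq_two_mul_mul (m := m) (n := n)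
      (Int.isCoprime_iff_gcd_eq_one.2 (by simpa using hgcd)) (Int.odd_iff.2 (by omega))
    rcases h2 with h | h <;> rcases h3 with h' | h' <;>
      simpa only [h, mul_assoc, h', mul_neg, IsCoprime.neg_left_iff, IsCoprime.neg_right_iff]
  have hsq : (c ^ 2 - d ^ 2) ^ 2 = D ^ 2 := by rcases h2 with h | h <;> simp [h]
  rw [GaussianInt.add_pow_two_mul_add_sub_pow_two_mul] at heq
  have hak := GaussianInt.dvd_of_add_pow_add_sub_pow_eq hkodd heq
    (hsq ▸ (pow_dvd_pow D hr).mul_left 2) hcop.of_mul_right_left.of_mul_right_left hcop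
  have hDk : D ∣ k := by rcases h2 with h | h <;> simpa [h] using hak
  have hcast : ((m ^ 2 - n ^ 2 : ℕ) : ℤ) = D := by
    push_cast [Nat.pow_le_pow_left hmn.le 2]
    rfl
  exact Int.natCast_dvd_natCast.1 (hcast ▸ hDk)

/-- Under the hypotheses `c² + d² = m² + n²`, `c² - d² = ±(m² - n²)`, `cd = ±mn`,
with `k, r > 1` and `k` odd: if `(c+di)^(2k) + (c-di)^(2k) = 2(m²-n²)^r` in the
Gaussian integers, then `m² - n²` divides `k`. -/
theorem sq_sub_sq_dvd_k
    (m n : ℕ) (hm : 0 < m) (hn : 0 < n) (hmn : n < m)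
    (hgcd : Nat.gcd m n = 1) (hpar : m % 2 ≠ n % 2)
    (c d : ℤ)
    (h1 : c ^ 2 + d ^ 2 = (m : ℤ) ^ 2 + (n : ℤ) ^ 2)
    (h2 : c ^ 2 - d ^ 2 = ((m : ℤ) ^ 2 - (n : ℤ) ^ 2)
          ∨ c ^ 2 - d ^ 2 = -((m : ℤ) ^ 2 - (n : ℤ) ^ 2))
    (h3 : c * d = (m : ℤ) * n ∨ c * d = -((m : ℤ) * n))
    (k r : ℕ) (hk : 1 < k) (hr : 1 < r) (hkodd : Odd k)
    (heq : ((c : GaussianInt) + (d : GaussianInt) * Zsqrtd.sqrtd) ^ (2 * k)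
        + ((c : GaussianInt) - (d : GaussianInt) * Zsqrtd.sqrtd) ^ (2 * k)
        = ((2 * ((m : ℤ) ^ 2 - (n : ℤ) ^ 2) ^ r : ℤ) : GaussianInt)) :
    (m ^ 2 - n ^ 2) ∣ k :=
  sq_sub_sq_dvd_k_general m n hmn hgcd hpar c d h2 h3 k r hr hkodd heq
end
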